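/- Let x∈𝔣_β be a homogeneous element of nonzero degree. If r_i(x)=0 for all i∈I, then x=0. Likewise, if ᵢr(x)=0 for all i∈I, then x=0. -/

import Mathlib

open scoped TensorProduct

noncomputable section

/-- A Cartan datum on `I`. -/
structure CartanDatum (I : Type) where
  c : I → I → ℤ
  symm : ∀ i j, c i j = c j i
  pos : ∀ i, 0 < c i i
  even : ∀ i, Even (c i i)
  dvd : ∀ i j, i ≠ j → c i i ∣ 2 * c i j
  nonpos : ∀ i j, i ≠ j → 2 * c i j ≤ 0

namespace CartanDatum

variable {I : Type} (cd : CartanDatum I)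

/-- `d i = (i·i)/2`. -/
def d (i : I) : ℤ := cd.c i i / 2

/-- `a i j = 2(i·j)/(i·i)`. -/
def a (i j : I) : ℤ := 2 * cd.c i j / cd.c i i

/-- Extension of the pairing to `ℕ[I] × ℕ[I]`. -/
def dotN (ν μ : I →₀ ℕ) : ℤ :=
  ν.sum fun i m => μ.sum fun j n => (m : ℤ) * (n : ℤ) * cd.c i j

end CartanDatum

/-- A multiplicative bilinear form `ℕ[I] × ℕ[I] → 𝔽`. -/
structure MultForm (I 𝔽 : Type) [Field 𝔽] where
  f : (I →₀ ℕ) → (I →₀ ℕ) → 𝔽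
  add_left : ∀ ν ν' μ, f (ν + ν') μ = f ν μ * f ν' μ
  add_right : ∀ μ ν ν', f μ (ν + ν') = f μ ν * f μ ν'
  ne_zero : ∀ ν μ, f ν μ ≠ 0

/-- The trivial multiplicative bilinear form, constantly `1`. -/
def trivMF (I 𝔽 : Type) [Field 𝔽] : MultForm I 𝔽 :=
  ⟨fun _ _ => 1, fun _ _ _ => by ring, fun _ _ _ => by ring, fun _ _ => one_ne_zero⟩

variable {I : Type}

/-- The generator `i` of `ℕ[I]`. -/
def δN (i : I) : I →₀ ℕ := Finsupp.single i 1

/-- The model for the free algebra `'𝔣` on the `θ i`. -/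
abbrev FA (𝔽 I : Type) [Field 𝔽] := MonoidAlgebra 𝔽 (FreeMonoid I)

/-- The generator `θ i` of `'𝔣`. -/
def θ (𝔽 : Type) [Field 𝔽] {I : Type} (i : I) : FA 𝔽 I :=
  MonoidAlgebra.of 𝔽 (FreeMonoid I) (FreeMonoid.of i)

/-- The `ℕ[I]`-degree of a word. -/
def wt [DecidableEq I] (w : FreeMonoid I) : I →₀ ℕ :=
  Multiset.toFinsupp (↑(FreeMonoid.toList w))

/-- Homogeneity of degree `ν` in `'𝔣`. -/
def IsHomog {𝔽 : Type} [Field 𝔽] [DecidableEq I] (ν : I →₀ ℕ) (x : FA 𝔽 I) : Prop :=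
  ∀ w ∈ Finsupp.support (x.coeff : FreeMonoid I →₀ 𝔽), wt w = ν

/-- The model for `'𝔣 ⊗ '𝔣` (basis: pairs of words). -/
abbrev TA (𝔽 I : Type) [Field 𝔽] := MonoidAlgebra 𝔽 (FreeMonoid I × FreeMonoid I)

/-- The tensor `x ⊗ y` in the model of `'𝔣 ⊗ '𝔣`. -/
def tmul {𝔽 : Type} [Field 𝔽] (x y : FA 𝔽 I) : TA 𝔽 I :=
  Finsupp.sum (x.coeff : FreeMonoid I →₀ 𝔽) fun w a =>
    Finsupp.sum (y.coeff : FreeMonoid I →₀ 𝔽) fun u b =>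
      MonoidAlgebra.ofCoeff (Finsupp.single (w, u) (a * b) : (FreeMonoid I × FreeMonoid I) →₀ 𝔽)

/-- The twisted multiplication on `'𝔣 ⊗ '𝔣`:
`(x₁⊗x₂)(y₁⊗y₂) = v^{-|y₁|·|x₂|} β(|x₂|,|y₁|) x₁y₁ ⊗ x₂y₂`. -/
def tMul [DecidableEq I] {𝔽 : Type} [Field 𝔽] (cd : CartanDatum I) (v : 𝔽)
    (β : MultForm I 𝔽) (z z' : TA 𝔽 I) : TA 𝔽 I :=
  Finsupp.sum (z.coeff : (FreeMonoid I × FreeMonoid I) →₀ 𝔽) fun p a =>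
    Finsupp.sum (z'.coeff : (FreeMonoid I × FreeMonoid I) →₀ 𝔽) fun q b =>
      MonoidAlgebra.ofCoeff (Finsupp.single (p.1 * q.1, p.2 * q.2)
        (a * b * v ^ (-(cd.dotN (wt q.1) (wt p.2))) * β.f (wt p.2) (wt q.1))
        : (FreeMonoid I × FreeMonoid I) →₀ 𝔽)

/-- The bilinear form on `'𝔣 ⊗ '𝔣` induced by a form `B` on `'𝔣`:
`(x₁⊗x₂, y₁⊗y₂) = α(|x₁|,|x₂|) (x₁,y₁) (x₂,y₂)` for homogeneous `x₁, x₂`. -/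
def pairT [DecidableEq I] {𝔽 : Type} [Field 𝔽] (α : MultForm I 𝔽)
    (B : FA 𝔽 I →ₗ[𝔽] FA 𝔽 I →ₗ[𝔽] 𝔽) (z z' : TA 𝔽 I) : 𝔽 :=
  Finsupp.sum (z.coeff : (FreeMonoid I × FreeMonoid I) →₀ 𝔽) fun p a =>
    Finsupp.sum (z'.coeff : (FreeMonoid I × FreeMonoid I) →₀ 𝔽) fun q b =>
      a * b * α.f (wt p.1) (wt p.2)
        * B (MonoidAlgebra.single p.1 1) (MonoidAlgebra.single q.1 1)
        * B (MonoidAlgebra.single p.2 1) (MonoidAlgebra.single q.2 1)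

/-- The quantum integer `[n]_c`. -/
def qnum {𝔽 : Type} [Field 𝔽] (c : 𝔽) (n : ℕ) : 𝔽 :=
  (c ^ (n : ℤ) - c ^ (-(n : ℤ))) / (c - c⁻¹)

/-- The quantum factorial `[n]_c!`. -/
def qfact {𝔽 : Type} [Field 𝔽] (c : 𝔽) (n : ℕ) : 𝔽 :=
  ∏ k ∈ Finset.range n, qnum c (k + 1)

/-- The divided power `θ_i^{(n)} = θ_i^n / [n]_{v_i}!`. -/
def θdiv [DecidableEq I] {𝔽 : Type} [Field 𝔽] (cd : CartanDatum I) (v : 𝔽)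
    (i : I) (n : ℕ) : FA 𝔽 I :=
  (qfact (v ^ cd.d i) n)⁻¹ • (θ 𝔽 i) ^ n

/-- The twisted quantum Serre element
`D_{ij} = Σ_{k+k'=1-a_{ij}} (-1)^k β(i,j)^{-k} θ_i^{(k)} θ_j θ_i^{(k')}`. -/
def Dij [DecidableEq I] {𝔽 : Type} [Field 𝔽] (cd : CartanDatum I) (v : 𝔽)
    (g : I → I → 𝔽) (i j : I) : FA 𝔽 I :=
  ∑ k ∈ Finset.range ((1 - cd.a i j).toNat + 1),
    ((-1 : 𝔽) ^ k * ((g i j)⁻¹) ^ k) •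
      (θdiv cd v i k * θ 𝔽 j * θdiv cd v i ((1 - cd.a i j).toNat - k))

end

/-
For `x` of degree `ν`, the identity `(x, y θ_i) = (r(x), y ⊗ θ_i)` only sees the terms of `r(x)`
whose right factor is `θ_i`, since words of different degrees are orthogonal; these terms make up
`r_i(x) ⊗ θ_i`. Hence `(x, y θ_i) = α(ν - i, i) (θ_i, θ_i) (r_i(x), y)`. A word of degree `ν ≠ 0`
ends in some `θ_i` and `x` is orthogonal to the words of any other degree, so `x` lies in the
radical once every `r_i(x)` does. Reading words from the left instead,
`(x, θ_i y) = α(i, ν - i) (θ_i, θ_i) (ᵢr(x), y)` gives the statement for `ᵢr`.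
-/

namespace MultForm

variable {I 𝔽 : Type} [Field 𝔽] (f : MultForm I 𝔽)

@[simp]
lemma f_zero_left (μ : I →₀ ℕ) : f.f 0 μ = 1 := by
  have h := f.add_left 0 0 μ
  rw [add_zero] at h
  exact (mul_eq_left₀ (f.ne_zero 0 μ)).1 h.symm

@[simp]
lemma f_zero_right (μ : I →₀ ℕ) : f.f μ 0 = 1 := by
  have h := f.add_right μ 0 0
  rw [add_zero] at h
  exact (mul_eq_left₀ (f.ne_zero μ 0)).1 h.symm

end MultForm

namespace CartanDatum

variable {I : Type} (cd : CartanDatum I)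

@[simp]
lemma dotN_zero_left (μ : I →₀ ℕ) : cd.dotN 0 μ = 0 := by
  simp [dotN]

@[simp]
lemma dotN_zero_right (ν : I →₀ ℕ) : cd.dotN ν 0 = 0 := by
  simp [dotN]

lemma dotN_comm (ν μ : I →₀ ℕ) : cd.dotN ν μ = cd.dotN μ ν := by
  simp only [dotN, Finsupp.sum]
  rw [Finset.sum_comm]
  refine Finset.sum_congr rfl fun j _ => Finset.sum_congr rfl fun i _ => ?_
  rw [cd.symm i j]
  ring

end CartanDatum

namespace FreeMonoid

variable {I : Type}

instance [DecidableEq I] : DecidableEq (FreeMonoid I) :=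
  inferInstanceAs (DecidableEq (List I))

lemma of_mul_eq_of_iff {i j : I} {w : FreeMonoid I} : of j * w = of i ↔ j = i ∧ w = 1 := by
  constructor
  · intro h
    have h' : j :: toList w = [i] := congrArg toList h
    rw [List.cons.injEq] at h'
    exact ⟨h'.1, toList.injective h'.2⟩
  · rintro ⟨rfl, rfl⟩
    exact mul_one _

lemma exists_eq_of_mul {w : FreeMonoid I} (h : w ≠ 1) : ∃ i w', w = of i * w' :=
  FreeMonoid.casesOn w (fun h => absurd rfl h) (fun i w' _ => ⟨i, w', rfl⟩) h

lemma exists_eq_mul_of {w : FreeMonoid I} (h : w ≠ 1) : ∃ w' i, w = w' * of i := by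
  have hl : toList w ≠ [] := fun hn => h (toList.injective hn)
  refine ⟨ofList (toList w).dropLast, (toList w).getLast hl, toList.injective ?_⟩
  simp only [toList_mul, toList_of, toList_ofList]
  exact (List.dropLast_append_getLast hl).symm

end FreeMonoid

section Weight

variable {I : Type} [DecidableEq I]

@[simp]
lemma wt_one : wt (1 : FreeMonoid I) = 0 := by
  simp [wt]

@[simp]
lemma wt_mul (w u : FreeMonoid I) : wt (w * u) = wt w + wt u := by
  simp [wt, ← Multiset.coe_add]

@[simp]
lemma wt_of (i : I) : wt (FreeMonoid.of i) = δN i := by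
  simp [wt, δN]

lemma eq_of_wt_eq_δN {w : FreeMonoid I} {i : I} (h : wt w = δN i) : w = FreeMonoid.of i := by
  have h1 : (FreeMonoid.toList w : Multiset I) = {i} := by
    apply Multiset.toFinsupp.injective
    simpa [wt, δN, Multiset.toFinsupp_singleton] using h
  rw [Multiset.coe_eq_singleton] at h1
  exact FreeMonoid.toList.injective h1

end Weight

section TensorModel

variable {I 𝔽 : Type} [Field 𝔽]

lemma θ_eq_single (i : I) : θ 𝔽 i = MonoidAlgebra.single (FreeMonoid.of i) 1 :=
  MonoidAlgebra.of_apply _ _ _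

lemma single_eq_smul_single_one (w : FreeMonoid I) (a : 𝔽) :
    (MonoidAlgebra.single w a : FA 𝔽 I) = a • MonoidAlgebra.single w 1 := by
  rw [MonoidAlgebra.smul_single', mul_one]

lemma tmul_single_single (w u : FreeMonoid I) (a b : 𝔽) :
    tmul (MonoidAlgebra.single w a) (MonoidAlgebra.single u b)
      = MonoidAlgebra.single (w, u) (a * b) := by
  unfold tmul
  rw [MonoidAlgebra.coeff_single, MonoidAlgebra.coeff_single, Finsupp.sum_single_index (by simp),
    Finsupp.sum_single_index (by simp), MonoidAlgebra.ofCoeff_single]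

lemma tmul_one_one : tmul (1 : FA 𝔽 I) 1 = MonoidAlgebra.single (1, 1) 1 := by
  rw [MonoidAlgebra.one_def, tmul_single_single, mul_one]

lemma tmul_θ_one (i : I) :
    tmul (θ 𝔽 i) 1 = MonoidAlgebra.single (FreeMonoid.of i, 1) 1 := by
  rw [θ_eq_single, MonoidAlgebra.one_def, tmul_single_single, mul_one]

lemma tmul_one_θ (i : I) :
    tmul 1 (θ 𝔽 i) = MonoidAlgebra.single (1, FreeMonoid.of i) 1 := by
  rw [θ_eq_single, MonoidAlgebra.one_def, tmul_single_single, mul_one]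

lemma single_of_mul (i : I) (w : FreeMonoid I) :
    (MonoidAlgebra.single (FreeMonoid.of i * w) 1 : FA 𝔽 I)
      = θ 𝔽 i * MonoidAlgebra.single w 1 := by
  rw [θ_eq_single, MonoidAlgebra.single_mul_single, mul_one]

lemma single_mul_of (w : FreeMonoid I) (i : I) :
    (MonoidAlgebra.single (w * FreeMonoid.of i) 1 : FA 𝔽 I)
      = MonoidAlgebra.single w 1 * θ 𝔽 i := by
  rw [θ_eq_single, MonoidAlgebra.single_mul_single, mul_one]

variable [DecidableEq I]

lemma pairT_single_right (α : MultForm I 𝔽) (B : FA 𝔽 I →ₗ[𝔽] FA 𝔽 I →ₗ[𝔽] 𝔽)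
    (z : TA 𝔽 I) (q : FreeMonoid I × FreeMonoid I) (b : 𝔽) :
    pairT α B z (MonoidAlgebra.single q b)
      = z.coeff.sum fun p a => a * b * α.f (wt p.1) (wt p.2)
          * B (MonoidAlgebra.single p.1 1) (MonoidAlgebra.single q.1 1)
          * B (MonoidAlgebra.single p.2 1) (MonoidAlgebra.single q.2 1) := by
  unfold pairT
  simp only [MonoidAlgebra.coeff_single]
  exact Finsupp.sum_congr fun p _ => Finsupp.sum_single_index (by ring)

lemma pairT_single_single (α : MultForm I 𝔽) (B : FA 𝔽 I →ₗ[𝔽] FA 𝔽 I →ₗ[𝔽] 𝔽)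
    (p q : FreeMonoid I × FreeMonoid I) (a b : 𝔽) :
    pairT α B (MonoidAlgebra.single p a) (MonoidAlgebra.single q b)
      = a * b * α.f (wt p.1) (wt p.2)
          * B (MonoidAlgebra.single p.1 1) (MonoidAlgebra.single q.1 1)
          * B (MonoidAlgebra.single p.2 1) (MonoidAlgebra.single q.2 1) := by
  rw [pairT_single_right, MonoidAlgebra.coeff_single]
  exact Finsupp.sum_single_index (by ring)

lemma pairT_add_left (α : MultForm I 𝔽) (B : FA 𝔽 I →ₗ[𝔽] FA 𝔽 I →ₗ[𝔽] 𝔽)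
    (z₁ z₂ z' : TA 𝔽 I) :
    pairT α B (z₁ + z₂) z' = pairT α B z₁ z' + pairT α B z₂ z' := by
  unfold pairT
  rw [MonoidAlgebra.coeff_add, Finsupp.sum_add_index' (by simp)]
  intro p a₁ a₂
  rw [← Finsupp.sum_add]
  exact Finsupp.sum_congr fun q _ => by ring

variable {cd : CartanDatum I} {v : 𝔽} {β : MultForm I 𝔽}

lemma tMul_single_left (p : FreeMonoid I × FreeMonoid I) (a : 𝔽) (z' : TA 𝔽 I) :
    tMul cd v β (MonoidAlgebra.single p a) z'
      = z'.coeff.sum fun q b =>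
          MonoidAlgebra.single (p.1 * q.1, p.2 * q.2)
            (a * b * v ^ (-(cd.dotN (wt q.1) (wt p.2))) * β.f (wt p.2) (wt q.1)) := by
  unfold tMul
  rw [MonoidAlgebra.coeff_single, Finsupp.sum_single_index (by simp)]
  rfl

lemma tMul_add_left (z₁ z₂ z' : TA 𝔽 I) :
    tMul cd v β (z₁ + z₂) z' = tMul cd v β z₁ z' + tMul cd v β z₂ z' := by
  unfold tMul
  rw [MonoidAlgebra.coeff_add, Finsupp.sum_add_index' (by simp)]
  intro p a₁ a₂
  rw [← Finsupp.sum_add]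
  refine Finsupp.sum_congr fun q _ => ?_
  rw [← MonoidAlgebra.ofCoeff_add, ← Finsupp.single_add]
  congr 2
  ring

lemma exists_of_mem_support_tMul {z z' : TA 𝔽 I} {p : FreeMonoid I × FreeMonoid I}
    (hp : p ∈ (tMul cd v β z z').coeff.support) :
    ∃ P ∈ z.coeff.support, ∃ Q ∈ z'.coeff.support, p = (P.1 * Q.1, P.2 * Q.2) := by
  unfold tMul at hp
  rw [MonoidAlgebra.coeff_finsuppSum] at hp
  obtain ⟨P, hP, hp⟩ := Finset.mem_biUnion.1 (Finsupp.support_sum hp)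
  rw [MonoidAlgebra.coeff_finsuppSum] at hp
  obtain ⟨Q, hQ, hp⟩ := Finset.mem_biUnion.1 (Finsupp.support_sum hp)
  exact ⟨P, hP, Q, hQ, Finset.mem_singleton.1 (Finsupp.support_single_subset hp)⟩

end TensorModel

section Homogeneous

variable {I 𝔽 : Type} [Field 𝔽] [DecidableEq I]

lemma isHomog_single (w : FreeMonoid I) (a : 𝔽) :
    IsHomog (wt w) (MonoidAlgebra.single w a) := by
  intro u hu
  rw [Finset.mem_singleton.1 (Finsupp.support_single_subset hu)]

lemma isHomog_θ (i : I) : IsHomog (δN i) (θ 𝔽 i) := by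
  rw [← wt_of i]
  exact isHomog_single _ _

lemma LinearMap.eq_of_isHomog {M : Type} [AddCommMonoid M] [Module 𝔽 M]
    {φ ψ : FA 𝔽 I →ₗ[𝔽] M} {ν : I →₀ ℕ}
    (h : ∀ w, wt w = ν → φ (MonoidAlgebra.single w 1) = ψ (MonoidAlgebra.single w 1))
    {x : FA 𝔽 I} (hx : IsHomog ν x) : φ x = ψ x := by
  rw [← MonoidAlgebra.sum_coeff_single x, map_finsuppSum, map_finsuppSum]
  refine Finsupp.sum_congr fun w hw => ?_
  rw [single_eq_smul_single_one, map_smul, map_smul, h w (hx w hw)]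

end Homogeneous

section Components

variable {I 𝔽 : Type} [Field 𝔽] [DecidableEq I]

/-- The `y` with `z = e ⊗ y + (terms whose left factor is a word other than e)`. -/
noncomputable def leftComponent (e : FreeMonoid I) : TA 𝔽 I →ₗ[𝔽] FA 𝔽 I :=
  (Finsupp.lsum 𝔽 fun p : FreeMonoid I × FreeMonoid I =>
    if p.1 = e then (MonoidAlgebra.lsingle (R := 𝔽) p.2 : 𝔽 →ₗ[𝔽] FA 𝔽 I) else 0)
    ∘ₗ (MonoidAlgebra.coeffLinearEquiv 𝔽).toLinearMap

/-- The `y` with `z = y ⊗ e + (terms whose right factor is a word other than e)`. -/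
noncomputable def rightComponent (e : FreeMonoid I) : TA 𝔽 I →ₗ[𝔽] FA 𝔽 I :=
  (Finsupp.lsum 𝔽 fun p : FreeMonoid I × FreeMonoid I =>
    if p.2 = e then (MonoidAlgebra.lsingle (R := 𝔽) p.1 : 𝔽 →ₗ[𝔽] FA 𝔽 I) else 0)
    ∘ₗ (MonoidAlgebra.coeffLinearEquiv 𝔽).toLinearMap

lemma leftComponent_single (e : FreeMonoid I) (p : FreeMonoid I × FreeMonoid I) (c : 𝔽) :
    leftComponent e (MonoidAlgebra.single p c)
      = if p.1 = e then (MonoidAlgebra.single p.2 c : FA 𝔽 I) else 0 := by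
  rw [leftComponent, LinearMap.comp_apply, LinearEquiv.coe_coe,
    MonoidAlgebra.coeffLinearEquiv_apply, MonoidAlgebra.coeff_single]
  erw [Finsupp.lsum_single]
  split <;> simp

lemma rightComponent_single (e : FreeMonoid I) (p : FreeMonoid I × FreeMonoid I) (c : 𝔽) :
    rightComponent e (MonoidAlgebra.single p c)
      = if p.2 = e then (MonoidAlgebra.single p.1 c : FA 𝔽 I) else 0 := by
  rw [rightComponent, LinearMap.comp_apply, LinearEquiv.coe_coe,
    MonoidAlgebra.coeffLinearEquiv_apply, MonoidAlgebra.coeff_single]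
  erw [Finsupp.lsum_single]
  split <;> simp

lemma leftComponent_apply (e : FreeMonoid I) (z : TA 𝔽 I) :
    leftComponent e z = z.coeff.sum fun p a =>
      if p.1 = e then (MonoidAlgebra.single p.2 a : FA 𝔽 I) else 0 := by
  rw [leftComponent, LinearMap.comp_apply, LinearEquiv.coe_coe,
    MonoidAlgebra.coeffLinearEquiv_apply]
  erw [Finsupp.lsum_apply]
  exact Finsupp.sum_congr fun p _ => by split <;> simp

lemma rightComponent_apply (e : FreeMonoid I) (z : TA 𝔽 I) :
    rightComponent e z = z.coeff.sum fun p a =>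
      if p.2 = e then (MonoidAlgebra.single p.1 a : FA 𝔽 I) else 0 := by
  rw [rightComponent, LinearMap.comp_apply, LinearEquiv.coe_coe,
    MonoidAlgebra.coeffLinearEquiv_apply]
  erw [Finsupp.lsum_apply]
  exact Finsupp.sum_congr fun p _ => by split <;> simp

variable {cd : CartanDatum I} {v : 𝔽} {β : MultForm I 𝔽}

lemma leftComponent_tMul_single (e : FreeMonoid I) (p : FreeMonoid I × FreeMonoid I) (a : 𝔽)
    (z : TA 𝔽 I) :
    leftComponent e (tMul cd v β (MonoidAlgebra.single p a) z)
      = z.coeff.sum fun q b =>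
          if p.1 * q.1 = e then
            (MonoidAlgebra.single (p.2 * q.2)
              (a * b * v ^ (-(cd.dotN (wt q.1) (wt p.2))) * β.f (wt p.2) (wt q.1)) : FA 𝔽 I)
          else 0 := by
  rw [tMul_single_left, map_finsuppSum]
  exact Finsupp.sum_congr fun q _ => leftComponent_single _ _ _

lemma rightComponent_tMul_single (e : FreeMonoid I) (p : FreeMonoid I × FreeMonoid I) (a : 𝔽)
    (z : TA 𝔽 I) :
    rightComponent e (tMul cd v β (MonoidAlgebra.single p a) z)
      = z.coeff.sum fun q b =>
          if p.2 * q.2 = e then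
            (MonoidAlgebra.single (p.1 * q.1)
              (a * b * v ^ (-(cd.dotN (wt q.1) (wt p.2))) * β.f (wt p.2) (wt q.1)) : FA 𝔽 I)
          else 0 := by
  rw [tMul_single_left, map_finsuppSum]
  exact Finsupp.sum_congr fun q _ => rightComponent_single _ _ _

lemma leftComponent_one_tMul_θ_tmul_one (i : I) (z : TA 𝔽 I) :
    leftComponent 1 (tMul cd v β (tmul (θ 𝔽 i) 1) z) = 0 := by
  rw [tmul_θ_one, leftComponent_tMul_single]
  refine (Finsupp.sum_congr fun q _ => ?_).trans (Finsupp.sum_fun_zero _)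
  simp

lemma rightComponent_one_tMul_one_tmul_θ (i : I) (z : TA 𝔽 I) :
    rightComponent 1 (tMul cd v β (tmul 1 (θ 𝔽 i)) z) = 0 := by
  rw [tmul_one_θ, rightComponent_tMul_single]
  refine (Finsupp.sum_congr fun q _ => ?_).trans (Finsupp.sum_fun_zero _)
  simp

lemma leftComponent_one_tMul_one_tmul_θ (i : I) (z : TA 𝔽 I) :
    leftComponent 1 (tMul cd v β (tmul 1 (θ 𝔽 i)) z) = θ 𝔽 i * leftComponent 1 z := by
  rw [tmul_one_θ, θ_eq_single, leftComponent_tMul_single, leftComponent_apply, Finsupp.sum,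
    Finsupp.sum, Finset.mul_sum]
  refine Finset.sum_congr rfl fun q _ => ?_
  by_cases h1 : q.1 = 1
  · rw [if_pos (by simp [h1]), if_pos h1, MonoidAlgebra.single_mul_single]
    simp [h1]
  · rw [if_neg (by simpa using h1), if_neg h1, mul_zero]

lemma rightComponent_one_tMul_θ_tmul_one (i : I) (z : TA 𝔽 I) :
    rightComponent 1 (tMul cd v β (tmul (θ 𝔽 i) 1) z) = θ 𝔽 i * rightComponent 1 z := by
  rw [tmul_θ_one, θ_eq_single, rightComponent_tMul_single, rightComponent_apply, Finsupp.sum,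
    Finsupp.sum, Finset.mul_sum]
  refine Finset.sum_congr rfl fun q _ => ?_
  by_cases h2 : q.2 = 1
  · rw [if_pos (by simp [h2]), if_pos h2, MonoidAlgebra.single_mul_single]
    simp
  · rw [if_neg (by simpa using h2), if_neg h2, mul_zero]

lemma leftComponent_of_tMul_θ_tmul_one (i j : I) (z : TA 𝔽 I) :
    leftComponent (FreeMonoid.of i) (tMul cd v β (tmul (θ 𝔽 j) 1) z)
      = if i = j then leftComponent 1 z else 0 := by
  rw [tmul_θ_one, leftComponent_tMul_single]
  by_cases hij : i = j
  · subst hij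
    rw [if_pos rfl, leftComponent_apply]
    refine Finsupp.sum_congr fun q _ => ?_
    by_cases h1 : q.1 = 1
    · rw [if_pos (by simpa [FreeMonoid.of_mul_eq_of_iff] using h1), if_pos h1]
      simp
    · rw [if_neg (by simp [h1]), if_neg h1]
  · rw [if_neg hij]
    refine (Finsupp.sum_congr fun q _ => ?_).trans (Finsupp.sum_fun_zero _)
    rw [if_neg (by simp [FreeMonoid.of_mul_eq_of_iff, Ne.symm hij])]

lemma rightComponent_of_tMul_θ_tmul_one (i j : I) (z : TA 𝔽 I) :
    rightComponent (FreeMonoid.of i) (tMul cd v β (tmul (θ 𝔽 j) 1) z)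
      = θ 𝔽 j * rightComponent (FreeMonoid.of i) z := by
  rw [tmul_θ_one, θ_eq_single, rightComponent_tMul_single, rightComponent_apply, Finsupp.sum,
    Finsupp.sum, Finset.mul_sum]
  refine Finset.sum_congr rfl fun q _ => ?_
  by_cases h2 : q.2 = FreeMonoid.of i
  · rw [if_pos (by simpa using h2), if_pos h2, MonoidAlgebra.single_mul_single]
    simp
  · rw [if_neg (by simpa using h2), if_neg h2, mul_zero]

lemma leftComponent_of_tMul_one_tmul_θ (i j : I) (z : TA 𝔽 I) :
    leftComponent (FreeMonoid.of i) (tMul cd v β (tmul 1 (θ 𝔽 j)) z)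
      = (v ^ (-(cd.dotN (δN i) (δN j))) * β.f (δN j) (δN i))
          • (θ 𝔽 j * leftComponent (FreeMonoid.of i) z) := by
  rw [tmul_one_θ, θ_eq_single, leftComponent_tMul_single, leftComponent_apply, Finsupp.sum,
    Finsupp.sum, Finset.mul_sum, Finset.smul_sum]
  refine Finset.sum_congr rfl fun q _ => ?_
  by_cases h1 : q.1 = FreeMonoid.of i
  · rw [if_pos (by simpa using h1), if_pos h1, MonoidAlgebra.single_mul_single,
      MonoidAlgebra.smul_single']
    rw [h1, wt_of, wt_of]
    ring_nf
  · rw [if_neg (by simpa using h1), if_neg h1, mul_zero, smul_zero]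

lemma rightComponent_of_tMul_one_tmul_θ (i j : I) (z : TA 𝔽 I) (μ : I →₀ ℕ)
    (hz : ∀ q ∈ z.coeff.support, q.2 = 1 → wt q.1 = μ) :
    rightComponent (FreeMonoid.of i) (tMul cd v β (tmul 1 (θ 𝔽 j)) z)
      = if i = j then (v ^ (-(cd.dotN μ (δN j))) * β.f (δN j) μ) • rightComponent 1 z
        else 0 := by
  rw [tmul_one_θ, rightComponent_tMul_single]
  by_cases hij : i = j
  · subst hij
    rw [if_pos rfl, rightComponent_apply, Finsupp.smul_sum]
    refine Finsupp.sum_congr fun q hq => ?_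
    by_cases h2 : q.2 = 1
    · rw [if_pos (by simpa [FreeMonoid.of_mul_eq_of_iff] using h2), if_pos h2,
        MonoidAlgebra.smul_single', hz q hq h2, wt_of, one_mul, one_mul]
      ring_nf
    · rw [if_neg (by simp [h2]), if_neg h2, smul_zero]
  · rw [if_neg hij]
    refine (Finsupp.sum_congr fun q _ => ?_).trans (Finsupp.sum_fun_zero _)
    rw [if_neg (by simp [FreeMonoid.of_mul_eq_of_iff, Ne.symm hij])]

end Components

section Coproduct

variable {I 𝔽 : Type} [Field 𝔽] [DecidableEq I]

structure IsTwistedCoproduct (cd : CartanDatum I) (v : 𝔽) (β : MultForm I 𝔽)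
    (r : FA 𝔽 I →ₗ[𝔽] TA 𝔽 I) : Prop where
  map_one : r 1 = tmul 1 1
  map_θ : ∀ i, r (θ 𝔽 i) = tmul (θ 𝔽 i) 1 + tmul 1 (θ 𝔽 i)
  map_mul : ∀ x y, r (x * y) = tMul cd v β (r x) (r y)

structure IsRightSkewDerivation (cd : CartanDatum I) (v : 𝔽) (β : MultForm I 𝔽)
    (ri : I → FA 𝔽 I →ₗ[𝔽] FA 𝔽 I) : Prop where
  map_one : ∀ i, ri i 1 = 0
  map_θ : ∀ i j, ri i (θ 𝔽 j) = if i = j then 1 else 0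
  map_mul : ∀ (i : I) (ν μ : I →₀ ℕ) (x y : FA 𝔽 I), IsHomog ν x → IsHomog μ y →
    ri i (x * y) = (v ^ (-(cd.dotN (δN i) μ)) * β.f (δN i) μ) • (ri i x * y) + x * ri i y

structure IsLeftSkewDerivation (cd : CartanDatum I) (v : 𝔽) (β : MultForm I 𝔽)
    (ir : I → FA 𝔽 I →ₗ[𝔽] FA 𝔽 I) : Prop where
  map_one : ∀ i, ir i 1 = 0
  map_θ : ∀ i j, ir i (θ 𝔽 j) = if i = j then 1 else 0
  map_mul : ∀ (i : I) (ν μ : I →₀ ℕ) (x y : FA 𝔽 I), IsHomog ν x → IsHomog μ y →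
    ir i (x * y) = ir i x * y + (v ^ (-(cd.dotN (δN i) ν)) * β.f ν (δN i)) • (x * ir i y)

namespace IsTwistedCoproduct

variable {cd : CartanDatum I} {v : 𝔽} {β : MultForm I 𝔽} {r : FA 𝔽 I →ₗ[𝔽] TA 𝔽 I}
  (hr : IsTwistedCoproduct cd v β r)
include hr

lemma map_single_one : r (MonoidAlgebra.single 1 1) = MonoidAlgebra.single (1, 1) 1 := by
  rw [← MonoidAlgebra.one_def, hr.map_one, tmul_one_one]

lemma map_single_of_mul (i : I) (w : FreeMonoid I) :
    r (MonoidAlgebra.single (FreeMonoid.of i * w) 1)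
      = tMul cd v β (tmul (θ 𝔽 i) 1 + tmul 1 (θ 𝔽 i)) (r (MonoidAlgebra.single w 1)) := by
  rw [single_of_mul, hr.map_mul, hr.map_θ]

lemma wt_add_wt_of_mem_support {w : FreeMonoid I} {p : FreeMonoid I × FreeMonoid I}
    (hp : p ∈ (r (MonoidAlgebra.single w 1)).coeff.support) : wt p.1 + wt p.2 = wt w := by
  induction w using FreeMonoid.recOn generalizing p with
  | one =>
    rw [hr.map_single_one, MonoidAlgebra.coeff_single] at hp
    rw [Finset.mem_singleton.1 (Finsupp.support_single_subset hp)]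
    simp
  | of_mul i w ih =>
    rw [hr.map_single_of_mul, tmul_θ_one, tmul_one_θ] at hp
    obtain ⟨P, hP, Q, hQ, rfl⟩ := exists_of_mem_support_tMul hp
    rw [MonoidAlgebra.coeff_add, MonoidAlgebra.coeff_single, MonoidAlgebra.coeff_single] at hP
    rcases Finset.mem_union.1 (Finsupp.support_add hP) with hP | hP <;>
      obtain rfl := Finset.mem_singleton.1 (Finsupp.support_single_subset hP) <;>
      simp only [wt_mul, wt_of, wt_one, ← ih hQ] <;> abel

lemma leftComponent_one_map_single (w : FreeMonoid I) :
    leftComponent 1 (r (MonoidAlgebra.single w 1)) = MonoidAlgebra.single w 1 := by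
  induction w using FreeMonoid.recOn with
  | one => simp [hr.map_single_one, leftComponent_single]
  | of_mul i w ih =>
    rw [hr.map_single_of_mul, tMul_add_left, map_add, leftComponent_one_tMul_θ_tmul_one,
      leftComponent_one_tMul_one_tmul_θ, zero_add, ih, single_of_mul]

lemma rightComponent_one_map_single (w : FreeMonoid I) :
    rightComponent 1 (r (MonoidAlgebra.single w 1)) = MonoidAlgebra.single w 1 := by
  induction w using FreeMonoid.recOn with
  | one => simp [hr.map_single_one, rightComponent_single]
  | of_mul i w ih =>
    rw [hr.map_single_of_mul, tMul_add_left, map_add, rightComponent_one_tMul_one_tmul_θ,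
      rightComponent_one_tMul_θ_tmul_one, add_zero, ih, single_of_mul]

lemma leftComponent_of_map_single {ir : I → FA 𝔽 I →ₗ[𝔽] FA 𝔽 I}
    (hir : IsLeftSkewDerivation cd v β ir) (i : I) (w : FreeMonoid I) :
    leftComponent (FreeMonoid.of i) (r (MonoidAlgebra.single w 1))
      = ir i (MonoidAlgebra.single w 1) := by
  induction w using FreeMonoid.recOn with
  | one =>
    rw [hr.map_single_one, leftComponent_single, if_neg (FreeMonoid.one_ne_of i),
      ← MonoidAlgebra.one_def, hir.map_one]
  | of_mul j w ih =>
    rw [hr.map_single_of_mul, tMul_add_left, map_add, leftComponent_of_tMul_θ_tmul_one,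
      leftComponent_of_tMul_one_tmul_θ, hr.leftComponent_one_map_single, ih, single_of_mul,
      hir.map_mul i (δN j) (wt w) _ _ (isHomog_θ j) (isHomog_single w 1), hir.map_θ]
    by_cases hij : i = j <;> simp [hij]

lemma rightComponent_of_map_single {ri : I → FA 𝔽 I →ₗ[𝔽] FA 𝔽 I}
    (hri : IsRightSkewDerivation cd v β ri) (i : I) (w : FreeMonoid I) :
    rightComponent (FreeMonoid.of i) (r (MonoidAlgebra.single w 1))
      = ri i (MonoidAlgebra.single w 1) := by
  induction w using FreeMonoid.recOn with
  | one =>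
    rw [hr.map_single_one, rightComponent_single, if_neg (FreeMonoid.one_ne_of i),
      ← MonoidAlgebra.one_def, hri.map_one]
  | of_mul j w ih =>
    have hz : ∀ q ∈ (r (MonoidAlgebra.single w 1)).coeff.support, q.2 = 1 → wt q.1 = wt w :=
      fun q hq h2 => by simpa [h2] using hr.wt_add_wt_of_mem_support hq
    rw [hr.map_single_of_mul, tMul_add_left, map_add, rightComponent_of_tMul_θ_tmul_one,
      rightComponent_of_tMul_one_tmul_θ i j _ (wt w) hz, hr.rightComponent_one_map_single, ih,
      single_of_mul, hri.map_mul i (δN j) (wt w) _ _ (isHomog_θ j) (isHomog_single w 1),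
      hri.map_θ]
    by_cases hij : i = j <;> simp [hij, cd.dotN_comm (wt w) (δN j), add_comm]

end IsTwistedCoproduct

end Coproduct

section Form

variable {I 𝔽 : Type} [Field 𝔽] [DecidableEq I]

structure IsCoproductForm (α : MultForm I 𝔽) (r : FA 𝔽 I →ₗ[𝔽] TA 𝔽 I)
    (B : FA 𝔽 I →ₗ[𝔽] FA 𝔽 I →ₗ[𝔽] 𝔽) : Prop where
  symm : ∀ x y, B x y = B y x
  one_one : B 1 1 = 1
  mul_right : ∀ x y' y'', B x (y' * y'') = pairT α B (r x) (tmul y' y'')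
  θ_θ_of_ne : ∀ i j, i ≠ j → B (θ 𝔽 i) (θ 𝔽 j) = 0

namespace IsCoproductForm

variable {cd : CartanDatum I} {v : 𝔽} {α β : MultForm I 𝔽} {r : FA 𝔽 I →ₗ[𝔽] TA 𝔽 I}
  {B : FA 𝔽 I →ₗ[𝔽] FA 𝔽 I →ₗ[𝔽] 𝔽} (hB : IsCoproductForm α r B)
  (hr : IsTwistedCoproduct cd v β r)
include hB hr

lemma apply_θ_one (j : I) : B (θ 𝔽 j) 1 = 0 := by
  -- both terms of `r(θ_j) = θ_j ⊗ 1 + 1 ⊗ θ_j` contribute, so `(θ_j, 1) = 2 (θ_j, 1)`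
  have h := hB.mul_right (θ 𝔽 j) 1 1
  rw [one_mul, hr.map_θ, tmul_θ_one, tmul_one_θ, tmul_one_one, pairT_add_left,
    pairT_single_single, pairT_single_single] at h
  simp only [wt_of, wt_one, MultForm.f_zero_right, MultForm.f_zero_left,
    ← MonoidAlgebra.one_def, ← θ_eq_single, hB.one_one] at h
  linear_combination -h

lemma apply_one_single {w : FreeMonoid I} (hw : w ≠ 1) : B 1 (MonoidAlgebra.single w 1) = 0 := by
  obtain ⟨j, w, rfl⟩ := FreeMonoid.exists_eq_of_mul hw
  rw [single_of_mul, hB.mul_right, hr.map_one, tmul_one_one, θ_eq_single, tmul_single_single,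
    pairT_single_single, ← MonoidAlgebra.one_def, ← θ_eq_single, hB.symm 1, hB.apply_θ_one hr]
  ring

lemma apply_θ_single_of_wt_ne {j : I} {u : FreeMonoid I} (hu : wt u ≠ δN j) :
    B (θ 𝔽 j) (MonoidAlgebra.single u 1) = 0 := by
  by_cases hu1 : u = 1
  · rw [hu1, ← MonoidAlgebra.one_def, hB.apply_θ_one hr]
  obtain ⟨k, u, rfl⟩ := FreeMonoid.exists_eq_of_mul hu1
  by_cases hu' : u = 1
  · subst hu'
    rw [mul_one, ← θ_eq_single]
    exact hB.θ_θ_of_ne j k (fun h => hu (by simp [h]))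
  rw [single_of_mul, hB.mul_right, hr.map_θ, tmul_θ_one, tmul_one_θ, θ_eq_single,
    tmul_single_single, pairT_add_left, pairT_single_single, pairT_single_single,
    ← MonoidAlgebra.one_def, hB.apply_one_single hr hu',
    hB.apply_one_single hr (FreeMonoid.of_ne_one k)]
  ring

lemma apply_single_single_of_wt_ne {w u : FreeMonoid I} (hwu : wt w ≠ wt u) :
    B (MonoidAlgebra.single w 1) (MonoidAlgebra.single u 1) = 0 := by
  induction u using FreeMonoid.recOn generalizing w with
  | one =>
    rw [hB.symm, ← MonoidAlgebra.one_def]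
    exact hB.apply_one_single hr (fun h => hwu (by rw [h]))
  | of_mul k u ih =>
    rw [single_of_mul, hB.mul_right, θ_eq_single, tmul_single_single, pairT_single_right,
      Finsupp.sum]
    refine Finset.sum_eq_zero fun p hp => ?_
    by_cases hp1 : wt p.1 = δN k
    · have hp2 : wt p.2 ≠ wt u := fun h => hwu (by
        rw [← hr.wt_add_wt_of_mem_support hp, hp1, h, wt_mul, wt_of])
      rw [ih hp2, mul_zero]
    · rw [hB.symm (MonoidAlgebra.single p.1 1), ← θ_eq_single, hB.apply_θ_single_of_wt_ne hr hp1]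
      ring

lemma apply_single_single_mul_of {ri : I → FA 𝔽 I →ₗ[𝔽] FA 𝔽 I}
    (hri : IsRightSkewDerivation cd v β ri) (w u : FreeMonoid I) (i : I) :
    B (MonoidAlgebra.single w 1) (MonoidAlgebra.single (u * FreeMonoid.of i) 1)
      = α.f (wt w - δN i) (δN i) * B (θ 𝔽 i) (θ 𝔽 i)
          * B (ri i (MonoidAlgebra.single w 1)) (MonoidAlgebra.single u 1) := by
  rw [single_mul_of, hB.mul_right, θ_eq_single, tmul_single_single, mul_one, pairT_single_right,
    ← hr.rightComponent_of_map_single hri, rightComponent_apply, map_finsuppSum,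
    LinearMap.finsupp_sum_apply, Finsupp.mul_sum]
  refine Finsupp.sum_congr fun p hp => ?_
  by_cases hp2 : p.2 = FreeMonoid.of i
  · have hp1 : wt p.1 = wt w - δN i := by
      have h := hr.wt_add_wt_of_mem_support hp
      rw [hp2, wt_of] at h
      exact eq_tsub_of_add_eq h
    rw [if_pos hp2, hp2, wt_of, hp1, single_eq_smul_single_one p.1 ((r _).coeff p), map_smul,
      LinearMap.smul_apply, smul_eq_mul]
    ring
  · rw [if_neg hp2, map_zero, LinearMap.zero_apply, mul_zero,
      hB.symm (MonoidAlgebra.single p.2 1), ← θ_eq_single,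
      hB.apply_θ_single_of_wt_ne hr (fun h => hp2 (eq_of_wt_eq_δN h))]
    ring

lemma apply_single_single_of_mul {ir : I → FA 𝔽 I →ₗ[𝔽] FA 𝔽 I}
    (hir : IsLeftSkewDerivation cd v β ir) (w u : FreeMonoid I) (i : I) :
    B (MonoidAlgebra.single w 1) (MonoidAlgebra.single (FreeMonoid.of i * u) 1)
      = α.f (δN i) (wt w - δN i) * B (θ 𝔽 i) (θ 𝔽 i)
          * B (ir i (MonoidAlgebra.single w 1)) (MonoidAlgebra.single u 1) := by
  rw [single_of_mul, hB.mul_right, θ_eq_single, tmul_single_single, one_mul, pairT_single_right,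
    ← hr.leftComponent_of_map_single hir, leftComponent_apply, map_finsuppSum,
    LinearMap.finsupp_sum_apply, Finsupp.mul_sum]
  refine Finsupp.sum_congr fun p hp => ?_
  by_cases hp1 : p.1 = FreeMonoid.of i
  · have hp2 : wt p.2 = wt w - δN i := by
      have h := hr.wt_add_wt_of_mem_support hp
      rw [hp1, wt_of, add_comm] at h
      exact eq_tsub_of_add_eq h
    rw [if_pos hp1, hp1, wt_of, hp2, single_eq_smul_single_one p.2 ((r _).coeff p), map_smul,
      LinearMap.smul_apply, smul_eq_mul]
    ring
  · rw [if_neg hp1, map_zero, LinearMap.zero_apply, mul_zero,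
      hB.symm (MonoidAlgebra.single p.1 1), ← θ_eq_single,
      hB.apply_θ_single_of_wt_ne hr (fun h => hp1 (eq_of_wt_eq_δN h))]
    ring

variable {ν : I →₀ ℕ} {x : FA 𝔽 I} (hx : IsHomog ν x)
include hx

lemma apply_single_of_wt_ne {u : FreeMonoid I} (hu : wt u ≠ ν) :
    B x (MonoidAlgebra.single u 1) = 0 :=
  LinearMap.eq_of_isHomog (φ := B.flip (MonoidAlgebra.single u 1)) (ψ := 0)
    (fun _ hw => hB.apply_single_single_of_wt_ne hr (hw ▸ Ne.symm hu)) hx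

lemma apply_single_mul_of {ri : I → FA 𝔽 I →ₗ[𝔽] FA 𝔽 I}
    (hri : IsRightSkewDerivation cd v β ri) (u : FreeMonoid I) (i : I) :
    B x (MonoidAlgebra.single (u * FreeMonoid.of i) 1)
      = α.f (ν - δN i) (δN i) * B (θ 𝔽 i) (θ 𝔽 i) * B (ri i x) (MonoidAlgebra.single u 1) :=
  LinearMap.eq_of_isHomog (φ := B.flip (MonoidAlgebra.single (u * FreeMonoid.of i) 1))
    (ψ := (α.f (ν - δN i) (δN i) * B (θ 𝔽 i) (θ 𝔽 i)) • B.flip (MonoidAlgebra.single u 1) ∘ₗ ri i)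
    (fun w hw => by simpa [hw] using hB.apply_single_single_mul_of hr hri w u i) hx

lemma apply_single_of_mul {ir : I → FA 𝔽 I →ₗ[𝔽] FA 𝔽 I}
    (hir : IsLeftSkewDerivation cd v β ir) (u : FreeMonoid I) (i : I) :
    B x (MonoidAlgebra.single (FreeMonoid.of i * u) 1)
      = α.f (δN i) (ν - δN i) * B (θ 𝔽 i) (θ 𝔽 i) * B (ir i x) (MonoidAlgebra.single u 1) :=
  LinearMap.eq_of_isHomog (φ := B.flip (MonoidAlgebra.single (FreeMonoid.of i * u) 1))
    (ψ := (α.f (δN i) (ν - δN i) * B (θ 𝔽 i) (θ 𝔽 i)) • B.flip (MonoidAlgebra.single u 1) ∘ₗ ir i)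
    (fun w hw => by simpa [hw] using hB.apply_single_single_of_mul hr hir w u i) hx

lemma apply_eq_zero_of_rightDeriv_apply_eq_zero {ri : I → FA 𝔽 I →ₗ[𝔽] FA 𝔽 I}
    (hri : IsRightSkewDerivation cd v β ri) (hν : ν ≠ 0) (h : ∀ i, B (ri i x) = 0) : B x = 0 := by
  refine MonoidAlgebra.lhom_ext' fun u => LinearMap.ext_ring ?_
  rw [LinearMap.comp_apply, MonoidAlgebra.lsingle_apply, LinearMap.zero_comp, LinearMap.zero_apply]
  by_cases hu : wt u = ν
  · have hu1 : u ≠ 1 := fun h1 => hν (by rw [← hu, h1, wt_one])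
    obtain ⟨u, i, rfl⟩ := FreeMonoid.exists_eq_mul_of hu1
    rw [hB.apply_single_mul_of hr hx hri, h i, LinearMap.zero_apply, mul_zero]
  · exact hB.apply_single_of_wt_ne hr hx hu

lemma apply_eq_zero_of_leftDeriv_apply_eq_zero {ir : I → FA 𝔽 I →ₗ[𝔽] FA 𝔽 I}
    (hir : IsLeftSkewDerivation cd v β ir) (hν : ν ≠ 0) (h : ∀ i, B (ir i x) = 0) : B x = 0 := by
  refine MonoidAlgebra.lhom_ext' fun u => LinearMap.ext_ring ?_
  rw [LinearMap.comp_apply, MonoidAlgebra.lsingle_apply, LinearMap.zero_comp, LinearMap.zero_apply]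
  by_cases hu : wt u = ν
  · have hu1 : u ≠ 1 := fun h1 => hν (by rw [← hu, h1, wt_one])
    obtain ⟨i, u, rfl⟩ := FreeMonoid.exists_eq_of_mul hu1
    rw [hB.apply_single_of_mul hr hx hir, h i, LinearMap.zero_apply, mul_zero]
  · exact hB.apply_single_of_wt_ne hr hx hu

end IsCoproductForm

end Form

theorem homogeneous_vanishing_criterion_general
    {I : Type} [DecidableEq I] (cd : CartanDatum I)
    {𝔽 : Type} [Field 𝔽] (v : 𝔽)
    (α β : MultForm I 𝔽)
    (r : FA 𝔽 I →ₗ[𝔽] TA 𝔽 I)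
    (hr1 : r 1 = tmul 1 1)
    (hrθ : ∀ i : I, r (θ 𝔽 i) = tmul (θ 𝔽 i) 1 + tmul 1 (θ 𝔽 i))
    (hrm : ∀ x y : FA 𝔽 I, r (x * y) = tMul cd v β (r x) (r y))
    (B : FA 𝔽 I →ₗ[𝔽] FA 𝔽 I →ₗ[𝔽] 𝔽)
    (hBsymm : ∀ x y, B x y = B y x)
    (hB1 : B 1 1 = 1)
    (hBθ : ∀ i j : I, B (θ 𝔽 i) (θ 𝔽 j) = if i = j then (1 - v ^ (-(cd.c i i)))⁻¹ else 0)
    (hBr : ∀ x y' y'', B x (y' * y'') = pairT α B (r x) (tmul y' y''))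
    (ri : I → (FA 𝔽 I →ₗ[𝔽] FA 𝔽 I))
    (hri1 : ∀ i, ri i 1 = 0)
    (hriθ : ∀ i j : I, ri i (θ 𝔽 j) = if i = j then 1 else 0)
    (hrim : ∀ (i : I) (ν μ : I →₀ ℕ) (x y : FA 𝔽 I), IsHomog ν x → IsHomog μ y →
      ri i (x * y) = (v ^ (-(cd.dotN (δN i) μ)) * β.f (δN i) μ) • (ri i x * y) + x * ri i y)
    (ir : I → (FA 𝔽 I →ₗ[𝔽] FA 𝔽 I))
    (hir1 : ∀ i, ir i 1 = 0)
    (hirθ : ∀ i j : I, ir i (θ 𝔽 j) = if i = j then 1 else 0)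
    (hirm : ∀ (i : I) (ν μ : I →₀ ℕ) (x y : FA 𝔽 I), IsHomog ν x → IsHomog μ y →
      ir i (x * y) = ir i x * y + (v ^ (-(cd.dotN (δN i) ν)) * β.f ν (δN i)) • (x * ir i y))
    :
    ∀ (ν : I →₀ ℕ), ν ≠ 0 → ∀ x : FA 𝔽 I, IsHomog ν x →
      ((∀ i : I, ∀ z, B (ri i x) z = 0) → ∀ z, B x z = 0) ∧
      ((∀ i : I, ∀ z, B (ir i x) z = 0) → ∀ z, B x z = 0) := by
  intro ν hν x hx
  have hr : IsTwistedCoproduct cd v β r := ⟨hr1, hrθ, hrm⟩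
  have hB : IsCoproductForm α r B :=
    ⟨hBsymm, hB1, hBr, fun i j hij => by rw [hBθ, if_neg hij]⟩
  exact ⟨fun h => LinearMap.congr_fun (hB.apply_eq_zero_of_rightDeriv_apply_eq_zero hr hx
      ⟨hri1, hriθ, hrim⟩ hν fun i => LinearMap.ext (h i)),
    fun h => LinearMap.congr_fun (hB.apply_eq_zero_of_leftDeriv_apply_eq_zero hr hx
      ⟨hir1, hirθ, hirm⟩ hν fun i => LinearMap.ext (h i))⟩

theorem homogeneous_vanishing_criterion
    {I : Type} [Fintype I] [DecidableEq I] (cd : CartanDatum I)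
    {𝔽 : Type} [Field 𝔽] [CharZero 𝔽] (v : 𝔽) (hv : Transcendental ℚ v)
    (α β : MultForm I 𝔽)
    (hαβ : ∀ i j : I, β.f (δN i) (δN j) * α.f (δN j) (δN i)
      = β.f (δN j) (δN i) * α.f (δN i) (δN j))
    (hββ : ∀ i j : I, β.f (δN i) (δN j) * β.f (δN j) (δN i) = 1)
    (hβii : ∀ i : I, β.f (δN i) (δN i) = 1)
    (r : FA 𝔽 I →ₗ[𝔽] TA 𝔽 I)
    (hr1 : r 1 = tmul 1 1)
    (hrθ : ∀ i : I, r (θ 𝔽 i) = tmul (θ 𝔽 i) 1 + tmul 1 (θ 𝔽 i))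
    (hrm : ∀ x y : FA 𝔽 I, r (x * y) = tMul cd v β (r x) (r y))
    (B : FA 𝔽 I →ₗ[𝔽] FA 𝔽 I →ₗ[𝔽] 𝔽)
    (hBsymm : ∀ x y, B x y = B y x)
    (hB1 : B 1 1 = 1)
    (hBθ : ∀ i j : I, B (θ 𝔽 i) (θ 𝔽 j) = if i = j then (1 - v ^ (-(cd.c i i)))⁻¹ else 0)
    (hBr : ∀ x y' y'', B x (y' * y'') = pairT α B (r x) (tmul y' y''))
    (hBl : ∀ x' x'' y, B (x' * x'') y = pairT α B (tmul x' x'') (r y))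
    (ri : I → (FA 𝔽 I →ₗ[𝔽] FA 𝔽 I))
    (hri1 : ∀ i, ri i 1 = 0)
    (hriθ : ∀ i j : I, ri i (θ 𝔽 j) = if i = j then 1 else 0)
    (hrim : ∀ (i : I) (ν μ : I →₀ ℕ) (x y : FA 𝔽 I), IsHomog ν x → IsHomog μ y →
      ri i (x * y) = (v ^ (-(cd.dotN (δN i) μ)) * β.f (δN i) μ) • (ri i x * y) + x * ri i y)
    (ir : I → (FA 𝔽 I →ₗ[𝔽] FA 𝔽 I))
    (hir1 : ∀ i, ir i 1 = 0)
    (hirθ : ∀ i j : I, ir i (θ 𝔽 j) = if i = j then 1 else 0)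
    (hirm : ∀ (i : I) (ν μ : I →₀ ℕ) (x y : FA 𝔽 I), IsHomog ν x → IsHomog μ y →
      ir i (x * y) = ir i x * y + (v ^ (-(cd.dotN (δN i) ν)) * β.f ν (δN i)) • (x * ir i y))
    :
    ∀ (ν : I →₀ ℕ), ν ≠ 0 → ∀ x : FA 𝔽 I, IsHomog ν x →
      ((∀ i : I, ∀ z, B (ri i x) z = 0) → ∀ z, B x z = 0) ∧
      ((∀ i : I, ∀ z, B (ir i x) z = 0) → ∀ z, B x z = 0) :=
  homogeneous_vanishing_criterion_general cd v α β r hr1 hrθ hrm B hBsymm hB1 hBθ hBr ri hri1 hriθ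
    hrim ir hir1 hirθ hirm
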